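/- arXiv:2101.07386 — 2 statements merged into one kernel-verified Lean document; each statement's English description precedes it below -/
import Mathlib

section
/- Let Ω₁, Ω₂ ⊆ ℂ be nonempty open sets and let φ : 𝒜(Ω₁) → 𝒜(Ω₂) be an isomorphism of Lie rings. Then the function φ(1) (the image of the constant function 1) is zero-free on Ω₂. -/
open Complex
open scoped Classical

noncomputable section

/-- The algebra `A(Omega)` of complex analytic functions on `Omega`, realized as those
functions `Omega -> C` that agree on `Omega` with some function differentiable on `Omega`. -/
def analyticAlg (Ω : Set ℂ) : Subalgebra ℂ (Ω → ℂ) where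
  carrier := {f | ∃ F : ℂ → ℂ, DifferentiableOn ℂ F Ω ∧ ∀ z : Ω, F z = f z}
  add_mem' := by
    rintro f g ⟨F, hF, hFf⟩ ⟨G, hG, hGg⟩
    exact ⟨F + G, hF.add hG, fun z => by simp [hFf z, hGg z]⟩
  mul_mem' := by
    rintro f g ⟨F, hF, hFf⟩ ⟨G, hG, hGg⟩
    exact ⟨F * G, hF.mul hG, fun z => by simp [hFf z, hGg z]⟩
  algebraMap_mem' := fun r => ⟨fun _ => r, differentiableOn_const r, fun _ => rfl⟩

/-- Extension of a function on `Omega` to the whole plane by zero. -/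
def extFun (Ω : Set ℂ) (f : Ω → ℂ) : ℂ → ℂ :=
  fun z => if h : z ∈ Ω then f ⟨z, h⟩ else 0

/-- The complex derivative of an analytic function on `Omega`. -/
def derivΩ (Ω : Set ℂ) (f : Ω → ℂ) : Ω → ℂ :=
  fun z => deriv (extFun Ω f) z

lemma derivΩ_mem {Ω : Set ℂ} (hΩ : IsOpen Ω) {f : Ω → ℂ}
    (hf : f ∈ analyticAlg Ω) : derivΩ Ω f ∈ analyticAlg Ω := by
  obtain ⟨F, hF, hFf⟩ := hf
  refine ⟨deriv F, ((hF.analyticOnNhd hΩ).deriv).differentiableOn, fun z => ?_⟩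
  have hev : extFun Ω f =ᶠ[nhds (z : ℂ)] F := by
    filter_upwards [hΩ.mem_nhds z.2] with w hw
    simp [extFun, hw, hFf ⟨w, hw⟩]
  exact (hev.deriv_eq).symm

/-- The Lie bracket `[f, g] = f * g' - f' * g` on `A(Omega)`. -/
def lieBkt {Ω : Set ℂ} (hΩ : IsOpen Ω) (f g : ↥(analyticAlg Ω)) : ↥(analyticAlg Ω) :=
  ⟨(f : Ω → ℂ) * derivΩ Ω g - derivΩ Ω f * (g : Ω → ℂ),
   sub_mem (mul_mem f.2 (derivΩ_mem hΩ g.2)) (mul_mem (derivΩ_mem hΩ f.2) g.2)⟩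

/-!
Write `u = φ 1`. In `𝒜(Ω₁)` the centralizer of `1` is abelian (it consists of the functions with
`f' = 0`), and `eₙ = exp (n z)` satisfies `[1, eₙ] = n eₙ` and `[eₙ, e₋ₙ] = -2n`; all of this
transports to `u` and `gₙ = φ eₙ`. Suppose `u (w) = 0`.

If `u` vanishes near `w`, the set where `u` vanishes locally is clopen in `Ω₂`, and the functions
supported on it commute with `u` without commuting with each other: contradiction. Otherwise, since
`[gₙ, g₋ₙ] = -2n u`, no `gₙ` (`n ≠ 0`) vanishes near `w`; comparing lowest-order terms in
`[u, gₙ] = n gₙ` at `w` gives `n = (m - 1) u'(w)` with `m ≥ 0` the order of `gₙ`, which cannot hold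
for `n = 1, 2, -2` simultaneously.
-/

open Filter Topology

lemma eventually_sub_mul_deriv_eq {f h : ℂ → ℂ} {w : ℂ} {m : ℕ} (hh : AnalyticAt ℂ h w)
    (hf : f =ᶠ[𝓝 w] fun z => (z - w) ^ m * h z) :
    ∀ᶠ z in 𝓝 w, (z - w) * deriv f z = m * (z - w) ^ m * h z + (z - w) ^ (m + 1) * deriv h z := by
  filter_upwards [hf.deriv, hh.eventually_analyticAt] with z hz hhz
  have hpow : HasDerivAt (fun y => (y - w) ^ m) (m * (z - w) ^ (m - 1) * 1) z :=
    ((hasDerivAt_id z).sub_const w).pow m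
  rw [hz, (hpow.fun_mul hhz.differentiableAt.hasDerivAt).deriv]
  cases m with
  | zero => simp
  | succ j => simp only [Nat.add_sub_cancel, pow_succ]; push_cast; ring

lemma eq_zero_of_eventually_pow_mul_eq_zero {B : ℂ → ℂ} {w : ℂ} {k : ℕ} (hB : AnalyticAt ℂ B w)
    (h : ∀ᶠ z in 𝓝 w, (z - w) ^ k * B z = 0) : B w = 0 := by
  have hne : ∀ᶠ z in 𝓝[≠] w, B z = 0 := by
    filter_upwards [nhdsWithin_le_nhds h, self_mem_nhdsWithin] with z hz hzw
    exact (mul_eq_zero.mp hz).resolve_left (pow_ne_zero _ (sub_ne_zero.mpr hzw))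
  exact (hB.frequently_zero_iff_eventually_zero.mp hne.frequently).self_of_nhds

theorem exists_nat_eq_sub_one_mul_deriv_of_wronskian_eq {U G : ℂ → ℂ} {w n : ℂ}
    (hU : AnalyticAt ℂ U w) (hG : AnalyticAt ℂ G w) (hUw : U w = 0)
    (hGord : analyticOrderAt G w ≠ ⊤)
    (hW : ∀ᶠ z in 𝓝 w, U z * deriv G z - deriv U z * G z = n * G z) :
    ∃ m : ℕ, n = (m - 1) * deriv U w := by
  obtain ⟨V, hV, hUV⟩ := (natCast_le_analyticOrderAt (n := 1) hU).mp
    (Order.one_le_iff_ne_zero.mpr (hU.analyticOrderAt_ne_zero.mpr hUw))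
  replace hUV : U =ᶠ[𝓝 w] fun z => (z - w) ^ 1 * V z := hUV
  obtain ⟨m, hm⟩ := ENat.ne_top_iff_exists.mp hGord
  obtain ⟨h, hh, hhw, hGh⟩ := hG.analyticOrderAt_eq_natCast.mp hm.symm
  replace hGh : G =ᶠ[𝓝 w] fun z => (z - w) ^ m * h z := hGh
  refine ⟨m, ?_⟩
  -- With `U = (z - w) V` and `G = (z - w) ^ m h`, the equation times `z - w` reads
  -- `(z - w) ^ (m + 1) B = 0`; evaluating `B` at `w` leaves `((m - 1) V w - n) h w = 0`.
  have hB : ∀ᶠ z in 𝓝 w, (z - w) ^ (m + 1) * (((m - 1) * V z - n) * h z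
      + (z - w) * (V z * deriv h z - deriv V z * h z)) = 0 := by
    filter_upwards [hW, hUV, hGh, eventually_sub_mul_deriv_eq hV hUV,
      eventually_sub_mul_deriv_eq hh hGh] with z hW hU hG hU' hG'
    linear_combination (z - w) * hW - (z - w) * deriv G z * hU - (z - w) * V z * hG'
      + G z * hU' + ((z - w) * V z + (z - w) ^ 2 * deriv V z + n * (z - w)) * hG
  have hBw := eq_zero_of_eventually_pow_mul_eq_zero (by fun_prop) hB
  have hUw' : deriv U w = V w := by
    rw [hUV.deriv_eq]
    have hsub : HasDerivAt (fun y => (y - w) ^ 1) 1 w := by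
      simpa using (hasDerivAt_id w).sub_const w
    rw [(hsub.fun_mul hV.differentiableAt.hasDerivAt).deriv]
    simp
  simp only [sub_self, zero_mul, add_zero] at hBw
  rw [hUw']
  linear_combination -(mul_eq_zero.mp hBw).resolve_right hhw

lemma not_forall_exists_nat_eq_sub_one_mul (a : ℂ) :
    ¬ ∀ n : ℤ, n ≠ 0 → ∃ m : ℕ, (n : ℂ) = (m - 1) * a := by
  intro h
  obtain ⟨m₁, h₁⟩ := h 1 one_ne_zero
  obtain ⟨m₂, h₂⟩ := h 2 two_ne_zero
  obtain ⟨m₃, h₃⟩ := h (-2) (by norm_num)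
  have ha : a ≠ 0 := by rintro rfl; simp at h₁
  have e₂ : ((2 * ((m₁ : ℤ) - 1) : ℤ) : ℂ) = ((m₂ - 1 : ℤ) : ℂ) := by
    apply mul_right_cancel₀ ha
    push_cast at h₁ h₂ ⊢
    linear_combination -2 * h₁ + h₂
  have e₃ : ((-2 * ((m₁ : ℤ) - 1) : ℤ) : ℂ) = ((m₃ - 1 : ℤ) : ℂ) := by
    apply mul_right_cancel₀ ha
    push_cast at h₁ h₃ ⊢
    linear_combination 2 * h₁ + h₃
  have hm₁ : m₁ = 1 := by
    have := Int.cast_injective e₂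
    have := Int.cast_injective e₃
    omega
  subst hm₁
  simp at h₁

variable {Ω : Set ℂ}

lemma extFun_apply (f : Ω → ℂ) (z : Ω) : extFun Ω f z = f z := by
  simp [extFun]

lemma extFun_of_mem (f : Ω → ℂ) {z : ℂ} (hz : z ∈ Ω) : extFun Ω f z = f ⟨z, hz⟩ := by
  simp [extFun, hz]

@[simp]
lemma extFun_zero : extFun Ω 0 = 0 := by
  ext z
  simp [extFun]

lemma extFun_eventuallyEq (hΩ : IsOpen Ω) {f : Ω → ℂ} {F : ℂ → ℂ} (hF : ∀ z : Ω, F z = f z)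
    {w : ℂ} (hw : w ∈ Ω) : extFun Ω f =ᶠ[𝓝 w] F := by
  filter_upwards [hΩ.mem_nhds hw] with z hz
  rw [extFun, dif_pos hz, ← hF ⟨z, hz⟩]

lemma extFun_eventuallyEq_extFun (hΩ : IsOpen Ω) {f g : Ω → ℂ} {z : Ω} (h : f =ᶠ[𝓝 z] g) :
    extFun Ω f =ᶠ[𝓝 (z : ℂ)] extFun Ω g := by
  rw [← hΩ.nhdsWithin_eq z.2, ← map_nhds_subtype_val, EventuallyEq, eventually_map]
  simp only [extFun_apply]
  exact h

lemma derivΩ_eq_deriv (hΩ : IsOpen Ω) {f : Ω → ℂ} {F : ℂ → ℂ} (hF : ∀ z : Ω, F z = f z)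
    (z : Ω) : derivΩ Ω f z = deriv F z :=
  (extFun_eventuallyEq hΩ hF z.2).deriv_eq

lemma mem_analyticAlg_iff (hΩ : IsOpen Ω) {f : Ω → ℂ} :
    f ∈ analyticAlg Ω ↔ DifferentiableOn ℂ (extFun Ω f) Ω := by
  refine ⟨fun ⟨F, hF, hFf⟩ z hz => ?_, fun hf => ⟨extFun Ω f, hf, extFun_apply f⟩⟩
  exact ((extFun_eventuallyEq hΩ hFf hz).differentiableAt_iff.mpr
    ((hF z hz).differentiableAt (hΩ.mem_nhds hz))).differentiableWithinAt

lemma analyticOnNhd_extFun (hΩ : IsOpen Ω) {f : Ω → ℂ} (hf : f ∈ analyticAlg Ω) :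
    AnalyticOnNhd ℂ (extFun Ω f) Ω :=
  ((mem_analyticAlg_iff hΩ).mp hf).analyticOnNhd hΩ

lemma lieBkt_apply (hΩ : IsOpen Ω) (f g : analyticAlg Ω) (z : Ω) :
    (lieBkt hΩ f g : Ω → ℂ) z
      = (f : Ω → ℂ) z * derivΩ Ω g z - derivΩ Ω f z * (g : Ω → ℂ) z := rfl

lemma zsmul_apply (c : ℤ) (k : analyticAlg Ω) (z : Ω) :
    ((c • k : analyticAlg Ω) : Ω → ℂ) z = c * (k : Ω → ℂ) z := by
  rw [← zsmul_eq_mul]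
  rfl

lemma eventually_wronskian_eq_of_lieBkt_eq (hΩ : IsOpen Ω) {f g k : analyticAlg Ω} {c : ℤ}
    (h : lieBkt hΩ f g = c • k) {w : ℂ} (hw : w ∈ Ω) :
    ∀ᶠ z in 𝓝 w, extFun Ω f z * deriv (extFun Ω g) z - deriv (extFun Ω f) z * extFun Ω g z
      = c * extFun Ω k z := by
  filter_upwards [hΩ.mem_nhds hw] with z hz
  have := congrFun (congrArg Subtype.val h) ⟨z, hz⟩
  rw [lieBkt_apply] at this
  simpa [extFun_of_mem _ hz, derivΩ, zsmul_apply] using this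

@[simp]
lemma derivΩ_one (hΩ : IsOpen Ω) : derivΩ Ω 1 = 0 := by
  ext z
  simp [derivΩ_eq_deriv hΩ (f := 1) (F := fun _ => 1) (fun _ => rfl) z]

lemma lieBkt_one_left (hΩ : IsOpen Ω) (f : analyticAlg Ω) :
    (lieBkt hΩ 1 f : Ω → ℂ) = derivΩ Ω f := by
  ext z
  simp [lieBkt_apply, hΩ]

lemma lieBkt_eq_zero_of_lieBkt_one_eq_zero (hΩ : IsOpen Ω) {f g : analyticAlg Ω}
    (hf : lieBkt hΩ 1 f = 0) (hg : lieBkt hΩ 1 g = 0) : lieBkt hΩ f g = 0 := by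
  have hf' := lieBkt_one_left hΩ f
  have hg' := lieBkt_one_left hΩ g
  rw [hf] at hf'
  rw [hg] at hg'
  ext z
  simp [lieBkt_apply, ← hf', ← hg']

lemma extFun_indicator_eventuallyEq (hΩ : IsOpen Ω) {V : Set Ω} (hV : IsClopen V) (f : Ω → ℂ)
    (z : Ω) : extFun Ω (V.indicator f) =ᶠ[𝓝 (z : ℂ)] extFun Ω (if z ∈ V then f else 0) := by
  apply extFun_eventuallyEq_extFun hΩ
  by_cases hz : z ∈ V
  · filter_upwards [hV.isOpen.mem_nhds hz] with y hy
    simp [hz, hy]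
  · filter_upwards [hV.compl.isOpen.mem_nhds hz] with y hy
    simp_all

lemma indicator_mem_analyticAlg (hΩ : IsOpen Ω) {V : Set Ω} (hV : IsClopen V) {f : Ω → ℂ}
    (hf : f ∈ analyticAlg Ω) : V.indicator f ∈ analyticAlg Ω := by
  rw [mem_analyticAlg_iff hΩ] at hf ⊢
  intro z hz
  refine ((extFun_indicator_eventuallyEq hΩ hV f ⟨z, hz⟩).differentiableAt_iff.mpr ?_)
    |>.differentiableWithinAt
  split_ifs
  · exact (hf z hz).differentiableAt (hΩ.mem_nhds hz)
  · simp

lemma derivΩ_indicator (hΩ : IsOpen Ω) {V : Set Ω} (hV : IsClopen V) (f : Ω → ℂ) :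
    derivΩ Ω (V.indicator f) = V.indicator (derivΩ Ω f) := by
  ext z
  rw [derivΩ, (extFun_indicator_eventuallyEq hΩ hV f z).deriv_eq]
  by_cases hz : z ∈ V <;> simp [hz, derivΩ]

theorem exists_lieBkt_ne_zero_of_eventually_eq_zero (hΩ : IsOpen Ω) (u : analyticAlg Ω)
    {w : Ω} (hu : ∀ᶠ z in 𝓝 (w : ℂ), extFun Ω u z = 0) :
    ∃ p q : analyticAlg Ω, lieBkt hΩ u p = 0 ∧ lieBkt hΩ u q = 0 ∧ lieBkt hΩ p q ≠ 0 := by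
  set V : Set Ω := {z | analyticOrderAt (extFun Ω u) z = ⊤}
  have hV : IsClopen V := (analyticOnNhd_extFun hΩ u.2).isClopen_setOfPred_analyticOrderAt_eq_top
  have hwV : w ∈ V := analyticOrderAt_eq_top.mpr hu
  let ind (f : analyticAlg Ω) : analyticAlg Ω :=
    ⟨V.indicator f, indicator_mem_analyticAlg hΩ hV f.2⟩
  have hcomm (f : analyticAlg Ω) : lieBkt hΩ u (ind f) = 0 := by
    ext z
    by_cases hz : z ∈ V
    · have hu0 : extFun Ω u =ᶠ[𝓝 (z : ℂ)] 0 := analyticOrderAt_eq_top.mp hz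
      have hz0 := hu0.self_of_nhds
      rw [extFun_apply] at hz0
      simp [lieBkt_apply, hz0, derivΩ, hu0.deriv_eq]
    · simp [lieBkt_apply, ind, derivΩ_indicator hΩ hV, hz]
  let idΩ : analyticAlg Ω := ⟨Subtype.val, id, differentiableOn_id, fun _ => rfl⟩
  refine ⟨ind 1, ind idΩ, hcomm 1, hcomm idΩ, fun h => ?_⟩
  have hderiv : derivΩ Ω idΩ = 1 := by
    ext z
    simp [derivΩ_eq_deriv hΩ (f := idΩ) (F := id) (fun _ => rfl) z]
  have := congrFun (congrArg Subtype.val h) w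
  simp [lieBkt_apply, ind, derivΩ_indicator hΩ hV, hΩ, hderiv, hwV] at this

def expMul (Ω : Set ℂ) (n : ℤ) : analyticAlg Ω :=
  ⟨fun z => exp (n * z), fun z => exp (n * z), by fun_prop, fun _ => rfl⟩

lemma expMul_apply (n : ℤ) (z : Ω) : (expMul Ω n : Ω → ℂ) z = exp (n * z) := rfl

lemma derivΩ_expMul (hΩ : IsOpen Ω) (n : ℤ) (z : Ω) :
    derivΩ Ω (expMul Ω n) z = n * exp (n * z) := by
  rw [derivΩ_eq_deriv hΩ (f := expMul Ω n) (F := fun z => exp (n * z)) (fun _ => rfl)]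
  rw [((hasDerivAt_id' (z : ℂ)).const_mul (n : ℂ)).cexp.deriv, mul_one, mul_comm]

lemma lieBkt_one_expMul (hΩ : IsOpen Ω) (n : ℤ) : lieBkt hΩ 1 (expMul Ω n) = n • expMul Ω n := by
  ext z
  rw [lieBkt_one_left, derivΩ_expMul hΩ, zsmul_apply, expMul_apply]

lemma lieBkt_expMul_expMul_neg (hΩ : IsOpen Ω) (n : ℤ) :
    lieBkt hΩ (expMul Ω n) (expMul Ω (-n)) = (-2 * n) • 1 := by
  ext z
  rw [lieBkt_apply, derivΩ_expMul hΩ, derivΩ_expMul hΩ, expMul_apply, expMul_apply]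
  have hexp : exp (n * z) * exp ((-n : ℤ) * z) = 1 := by
    rw [← exp_add]; push_cast; simp
  rw [zsmul_apply, OneMemClass.coe_one, Pi.one_apply]
  push_cast at hexp ⊢
  linear_combination (-2 * n : ℂ) * hexp

section LieIso

variable {Ω₁ Ω₂ : Set ℂ} {h₁ : IsOpen Ω₁} {h₂ : IsOpen Ω₂} {φ : analyticAlg Ω₁ ≃+ analyticAlg Ω₂}

lemma lieBkt_eq_zero_of_lieBkt_map_one_eq_zero
    (hφ : ∀ f g, φ (lieBkt h₁ f g) = lieBkt h₂ (φ f) (φ g)) {p q : analyticAlg Ω₂}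
    (hp : lieBkt h₂ (φ 1) p = 0) (hq : lieBkt h₂ (φ 1) q = 0) : lieBkt h₂ p q = 0 := by
  have hpull (r : analyticAlg Ω₂) (hr : lieBkt h₂ (φ 1) r = 0) : lieBkt h₁ 1 (φ.symm r) = 0 :=
    φ.injective (by rw [hφ, φ.apply_symm_apply, hr, map_zero])
  have := congrArg φ (lieBkt_eq_zero_of_lieBkt_one_eq_zero h₁ (hpull p hp) (hpull q hq))
  rwa [hφ, φ.apply_symm_apply, φ.apply_symm_apply, map_zero] at this

lemma exists_nat_eq_sub_one_mul_deriv_map_one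
    (hφ : ∀ f g, φ (lieBkt h₁ f g) = lieBkt h₂ (φ f) (φ g))
    {w : Ω₂} (hw : (φ 1 : Ω₂ → ℂ) w = 0)
    (hloc : ¬ ∀ᶠ z in 𝓝 (w : ℂ), extFun Ω₂ (φ 1) z = 0) {n : ℤ} (hn : n ≠ 0) :
    ∃ m : ℕ, (n : ℂ) = (m - 1) * deriv (extFun Ω₂ (φ 1)) w := by
  set G := extFun Ω₂ (φ (expMul Ω₁ n))
  have heigen : lieBkt h₂ (φ 1) (φ (expMul Ω₁ n)) = n • φ (expMul Ω₁ n) := by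
    rw [← hφ, lieBkt_one_expMul, map_zsmul]
  have hpair : lieBkt h₂ (φ (expMul Ω₁ n)) (φ (expMul Ω₁ (-n))) = (-2 * n) • φ 1 := by
    rw [← hφ, lieBkt_expMul_expMul_neg, map_zsmul]
  have hGord : analyticOrderAt G w ≠ ⊤ := by
    rw [Ne, analyticOrderAt_eq_top]
    intro hG
    have hG' : G =ᶠ[𝓝 (w : ℂ)] 0 := hG
    refine hloc ?_
    filter_upwards [eventually_wronskian_eq_of_lieBkt_eq h₂ hpair w.2, hG, hG'.deriv]
      with z hz hGz hG'z
    simpa [G, hGz, hG'z, hn] using hz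
  exact exists_nat_eq_sub_one_mul_deriv_of_wronskian_eq
    (analyticOnNhd_extFun h₂ (φ 1).2 w w.2) (analyticOnNhd_extFun h₂ (φ _).2 w w.2)
    (by rwa [extFun_apply]) hGord (eventually_wronskian_eq_of_lieBkt_eq h₂ heigen w.2)

end LieIso

theorem stmt13_general (Ω₁ Ω₂ : Set ℂ) (h₁ : IsOpen Ω₁) (h₂ : IsOpen Ω₂)
    (φ : ↥(analyticAlg Ω₁) ≃+ ↥(analyticAlg Ω₂))
    (hφ : ∀ f g, φ (lieBkt h₁ f g) = lieBkt h₂ (φ f) (φ g)) :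
    ∀ w : Ω₂, (φ 1).1 w ≠ 0 := by
  intro w hw
  by_cases hloc : ∀ᶠ z in 𝓝 (w : ℂ), extFun Ω₂ (φ 1) z = 0
  · obtain ⟨p, q, hp, hq, hpq⟩ := exists_lieBkt_ne_zero_of_eventually_eq_zero h₂ (φ 1) hloc
    exact hpq (lieBkt_eq_zero_of_lieBkt_map_one_eq_zero hφ hp hq)
  · exact not_forall_exists_nat_eq_sub_one_mul _
      fun n hn => exists_nat_eq_sub_one_mul_deriv_map_one hφ hw hloc hn

/-- for a Lie ring isomorphism `phi : A(Omega1) -> A(Omega2)`, the function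
`phi 1` is zero-free. -/
theorem stmt13 (Ω₁ Ω₂ : Set ℂ) (h₁ : IsOpen Ω₁) (hne₁ : Ω₁.Nonempty)
    (h₂ : IsOpen Ω₂) (hne₂ : Ω₂.Nonempty)
    (φ : ↥(analyticAlg Ω₁) ≃+ ↥(analyticAlg Ω₂))
    (hφ : ∀ f g, φ (lieBkt h₁ f g) = lieBkt h₂ (φ f) (φ g)) :
    ∀ w : Ω₂, (φ 1).1 w ≠ 0 :=
  stmt13_general Ω₁ Ω₂ h₁ h₂ φ hφ

end
end

section
/- Let Ω ⊆ ℂ be a nonempty open set. An ideal I of the ring 𝒜(Ω) is a proper principal maximal ideal if and only if there exists α ∈ Ω such that I = M_α = {f ∈ 𝒜(Ω) : f(α) = 0}. -/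
set_option synthInstance.maxHeartbeats 1000000
set_option maxHeartbeats 1000000

open Complex
open scoped Classical

noncomputable section

/-!
The ideal `M_α` is the kernel of evaluation at `α`, which is surjective onto the field `ℂ`, so
`M_α` is maximal; it is generated by `z - α` because `f = (z - α) · dslope f α` and the slope
function `dslope f α` is again analytic on the open set `Ω`. Conversely, a proper principal
ideal `(g)` has a non-unit generator, and a function without zeros is invertible in `𝒜(Ω)`,
so `g` vanishes at some `α`; then `(g) ⊆ M_α`, with equality when `(g)` is maximal.
-/

namespace analyticAlg

variable {Ω : Set ℂ}

def evalHom (α : Ω) : analyticAlg Ω →+* ℂ :=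
  (Pi.evalRingHom (fun _ : Ω => ℂ) α).comp (analyticAlg Ω).val.toRingHom

lemma mem_ker_evalHom {α : Ω} {f : analyticAlg Ω} : f ∈ RingHom.ker (evalHom α) ↔ f.1 α = 0 :=
  RingHom.mem_ker

lemma evalHom_surjective (α : Ω) : Function.Surjective (evalHom α) :=
  fun c => ⟨algebraMap ℂ _ c, rfl⟩

lemma isMaximal_ker_evalHom (α : Ω) : (RingHom.ker (evalHom α)).IsMaximal :=
  RingHom.ker_isMaximal_of_surjective _ (evalHom_surjective α)

lemma isUnit_iff_forall_ne_zero {g : analyticAlg Ω} : IsUnit g ↔ ∀ z : Ω, g.1 z ≠ 0 := by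
  refine ⟨fun hg z => (hg.map (evalHom z)).ne_zero, fun hg => ?_⟩
  obtain ⟨G, hG, hGg⟩ := g.2
  have hG_ne : ∀ z ∈ Ω, G z ≠ 0 := fun z hz => hGg ⟨z, hz⟩ ▸ hg ⟨z, hz⟩
  have hinv : (fun z : Ω => (g.1 z)⁻¹) ∈ analyticAlg Ω :=
    ⟨fun z => (G z)⁻¹, hG.inv hG_ne, fun z => by simp [hGg z]⟩
  exact IsUnit.of_mul_eq_one (⟨_, hinv⟩ : analyticAlg Ω) (Subtype.ext <| funext fun z =>
    mul_inv_cancel₀ (hg z))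

def subConst (α : Ω) : analyticAlg Ω :=
  ⟨fun z => (z : ℂ) - α, fun z => z - α, (differentiable_id.sub_const _).differentiableOn,
    fun _ => rfl⟩

lemma dvd_of_apply_eq_zero (hΩ : IsOpen Ω) {α : Ω} {f : analyticAlg Ω} (hf : f.1 α = 0) :
    subConst α ∣ f := by
  obtain ⟨F, hF, hFf⟩ := f.2
  have hFα : F α = 0 := (hFf α).trans hf
  have hslope : (fun z : Ω => dslope F α z) ∈ analyticAlg Ω :=
    ⟨dslope F α, (differentiableOn_dslope (hΩ.mem_nhds α.2)).mpr hF, fun _ => rfl⟩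
  refine ⟨⟨_, hslope⟩, Subtype.ext <| funext fun z => ?_⟩
  have := sub_smul_dslope F (α : ℂ) z
  rw [smul_eq_mul, hFα, sub_zero, hFf z] at this
  exact this.symm

lemma ker_evalHom_eq_span (hΩ : IsOpen Ω) (α : Ω) :
    RingHom.ker (evalHom α) = Ideal.span {subConst α} := by
  refine le_antisymm (fun f hf => Ideal.mem_span_singleton.mpr ?_) ?_
  · exact dvd_of_apply_eq_zero hΩ (mem_ker_evalHom.mp hf)
  · rw [Ideal.span_le, Set.singleton_subset_iff, SetLike.mem_coe, mem_ker_evalHom]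
    exact sub_self _

lemma exists_eq_ker_evalHom_of_isPrincipal {I : Ideal (analyticAlg Ω)} (hI : I ≠ ⊤)
    (hprinc : Submodule.IsPrincipal I) (hmax : I.IsMaximal) :
    ∃ α : Ω, I = RingHom.ker (evalHom α) := by
  obtain ⟨g, rfl⟩ := hprinc
  have hg : ¬IsUnit g := fun hg => hI (Ideal.span_singleton_eq_top.mpr hg)
  obtain ⟨α, hα⟩ : ∃ α : Ω, g.1 α = 0 := by
    simpa [isUnit_iff_forall_ne_zero] using hg
  refine ⟨α, hmax.eq_of_le (isMaximal_ker_evalHom α).ne_top ?_⟩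
  rw [Ideal.submodule_span_eq, Ideal.span_le, Set.singleton_subset_iff, SetLike.mem_coe,
    mem_ker_evalHom]
  exact hα

end analyticAlg

theorem stmt16_general (Ω : Set ℂ) (hΩ : IsOpen Ω)
    (I : Ideal ↥(analyticAlg Ω)) :
    (I ≠ ⊤ ∧ Submodule.IsPrincipal I ∧ I.IsMaximal) ↔
      ∃ α : Ω, ∀ f : ↥(analyticAlg Ω), f ∈ I ↔ f.1 α = 0 := by
  have hker : ∀ α : Ω, (∀ f, f ∈ I ↔ f.1 α = 0) ↔ I = RingHom.ker (analyticAlg.evalHom α) :=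
    fun α => by simp only [SetLike.ext_iff, analyticAlg.mem_ker_evalHom]
  simp only [hker]
  constructor
  · rintro ⟨hI, hprinc, hmax⟩
    exact analyticAlg.exists_eq_ker_evalHom_of_isPrincipal hI hprinc hmax
  · rintro ⟨α, rfl⟩
    have hmax := analyticAlg.isMaximal_ker_evalHom α
    exact ⟨hmax.ne_top, ⟨_, analyticAlg.ker_evalHom_eq_span hΩ α⟩, hmax⟩

/-- the proper principal maximal ideals of `A(Omega)` are exactly the ideals
`M_alpha` for `alpha in Omega`. -/
theorem stmt16 (Ω : Set ℂ) (hΩ : IsOpen Ω) (hne : Ω.Nonempty)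
    (I : Ideal ↥(analyticAlg Ω)) :
    (I ≠ ⊤ ∧ Submodule.IsPrincipal I ∧ I.IsMaximal) ↔
      ∃ α : Ω, ∀ f : ↥(analyticAlg Ω), f ∈ I ↔ f.1 α = 0 :=
  stmt16_general Ω hΩ I

end
end
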